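/- Under the hypotheses of the MA recursion (f m-strongly convex with L-Lipschitz gradient, noise zero-mean with variance ≤ σ², step size 0 < α ≤ 2/(m+L), all workers initialized at θ_0), for all t: E[Σ_{i=1}^n ‖θ_t^i − θ_*‖²] ≤ (1 − 2α·mL/(m+L))^t · n·‖θ_0 − θ_*‖² + n·((m+L)/(2mL))·α·σ². -/

import Mathlib

open scoped RealInnerProductSpace
open MeasureTheory ProbabilityTheory

/-!
Strong convexity and `L`-smoothness make the gradient cocoercive,
`‖g x - g y‖² + m L ‖x - y‖² ≤ (m + L) ⟪g x - g y, x - y⟫` (Baillon–Haddad applied to the convex,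
`(L - m)`-smooth function `f - m/2 ‖·‖²`), so for `α ≤ 2 / (m + L)` the gradient step
`x ↦ x - α g x` shrinks squared distances to the minimiser by the factor
`c = 1 - 2 α m L / (m + L)`. In round `t` every worker takes this step from the common average,
which depends only on the noise of earlier rounds and is therefore independent of the fresh,
centred noise `ξ (t, i)`: the cross term vanishes in expectation and the noise adds `α² σ²` per
worker. Since the squared distance of the average is at most the mean of the workers' squared
distances, the expected total error satisfies `r (t + 1) ≤ c r t + n α² σ²`, whose fixed point is
`n (m + L) / (2 m L) α σ²`.
-/

theorem le_add_add_half_of_deriv_sub_le {φ φ' : ℝ → ℝ} {C : ℝ}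
    (hφ : ∀ s, HasDerivAt φ (φ' s) s) (hC : ∀ s ∈ Set.Ioo (0 : ℝ) 1, φ' s - φ' 0 ≤ C * s) :
    φ 1 ≤ φ 0 + φ' 0 + C / 2 := by
  let ψ s := φ s - s * φ' 0 - C / 2 * s ^ 2
  have hψ s : HasDerivAt ψ (φ' s - φ' 0 - C * s) s := by
    refine (((hφ s).sub ((hasDerivAt_id s).mul_const (φ' 0))).sub
      ((hasDerivAt_pow 2 s).const_mul (C / 2))).congr_deriv ?_
    simp only [one_mul]
    push_cast
    ring
  have hanti : AntitoneOn ψ (Set.Icc 0 1) := by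
    refine antitoneOn_of_hasDerivWithinAt_nonpos (convex_Icc 0 1)
      (HasDerivAt.continuousOn fun s _ => hψ s) (fun s _ => (hψ s).hasDerivWithinAt) ?_
    rw [interior_Icc]
    intro s hs
    linarith [hC s hs]
  have := hanti (Set.left_mem_Icc.2 zero_le_one) (Set.right_mem_Icc.2 zero_le_one) zero_le_one
  simp only [ψ] at this
  linarith

section Gradient

variable {E : Type*} [NormedAddCommGroup E] [InnerProductSpace ℝ E] [CompleteSpace E]
  {f : E → ℝ} {g : E → E}

theorem HasGradientAt.hasDerivAt_comp_add_smul {f' y v : E} {t : ℝ}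
    (hf : HasGradientAt f f' (y + t • v)) :
    HasDerivAt (fun s : ℝ => f (y + s • v)) ⟪f', v⟫ t := by
  have hline : HasDerivAt (fun s : ℝ => y + s • v) v t := by
    simpa using ((hasDerivAt_id t).smul_const v).const_add y
  have := hf.hasFDerivAt.comp_hasDerivAt t hline
  rw [InnerProductSpace.toDual_apply_apply] at this
  exact this

theorem HasGradientAt.sub_half_mul_norm_sq {f' x : E} (hf : HasGradientAt f f' x) (c : ℝ) :
    HasGradientAt (fun x => f x - c / 2 * ‖x‖ ^ 2) (f' - c • x) x := by
  rw [hasGradientAt_iff_hasFDerivAt] at hf ⊢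
  refine (hf.sub ((hasStrictFDerivAt_norm_sq x).hasFDerivAt.const_mul (c / 2))).congr_fderiv ?_
  ext v
  simp
  ring

theorem IsLocalMin.hasGradientAt_eq_zero {f' x : E} (hmin : IsLocalMin f x)
    (hf : HasGradientAt f f' x) : f' = 0 := by
  simpa using hmin.hasFDerivAt_eq_zero hf.hasFDerivAt

variable (hg : ∀ x, HasGradientAt f (g x) x)
include hg

theorem le_add_inner_add_sq_of_inner_sub_le {C : ℝ}
    (hC : ∀ a b, ⟪g a - g b, a - b⟫ ≤ C * ‖a - b‖ ^ 2) (y z : E) :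
    f z ≤ f y + ⟪g y, z - y⟫ + C / 2 * ‖z - y‖ ^ 2 := by
  set v := z - y
  have hderiv s := (hg (y + s • v)).hasDerivAt_comp_add_smul (t := s)
  have key := le_add_add_half_of_deriv_sub_le hderiv (C := C * ‖v‖ ^ 2) fun s hs => by
    have h := hC (y + s • v) y
    rw [add_sub_cancel_left, real_inner_smul_right, norm_smul, Real.norm_eq_abs, mul_pow,
      sq_abs, ← mul_assoc] at h
    simp only [zero_smul, add_zero, ← inner_sub_left]
    nlinarith [hs.1]
  simp only [zero_smul, add_zero, one_smul, v, add_sub_cancel] at key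
  linarith

theorem add_inner_add_norm_sq_div_le_of_convex {C : ℝ} (hC0 : 0 < C)
    (hconv : ∀ x y, f y ≥ f x + ⟪g x, y - x⟫)
    (hC : ∀ a b, ⟪g a - g b, a - b⟫ ≤ C * ‖a - b‖ ^ 2) (x y : E) :
    f x + ⟪g x, y - x⟫ + ‖g y - g x‖ ^ 2 / (2 * C) ≤ f y := by
  -- compare the upper quadratic model of `f` at `y` with its linear lower model at `x`
  set z := y - C⁻¹ • (g y - g x)
  have hdesc := le_add_inner_add_sq_of_inner_sub_le hg hC y z
  have hsupp := hconv x z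
  rw [show z - y = -(C⁻¹ • (g y - g x)) by simp [z], inner_neg_right, real_inner_smul_right,
    norm_neg, norm_smul, Real.norm_eq_abs, abs_inv, abs_of_pos hC0] at hdesc
  rw [show z - x = (y - x) - C⁻¹ • (g y - g x) by simp [z]; abel, inner_sub_right,
    real_inner_smul_right] at hsupp
  have hsq : ⟪g y, g y - g x⟫ - ⟪g x, g y - g x⟫ = ‖g y - g x‖ ^ 2 := by
    rw [← inner_sub_left, real_inner_self_eq_norm_sq]
  field_simp at hdesc hsupp ⊢
  nlinarith

theorem norm_sub_sq_le_mul_inner_of_convex {C : ℝ} (hC0 : 0 < C)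
    (hconv : ∀ x y, f y ≥ f x + ⟪g x, y - x⟫)
    (hC : ∀ a b, ⟪g a - g b, a - b⟫ ≤ C * ‖a - b‖ ^ 2) (x y : E) :
    ‖g x - g y‖ ^ 2 ≤ C * ⟪g x - g y, x - y⟫ := by
  have hxy := add_inner_add_norm_sq_div_le_of_convex hg hC0 hconv hC x y
  have hyx := add_inner_add_norm_sq_div_le_of_convex hg hC0 hconv hC y x
  rw [norm_sub_rev] at hyx
  have hinner : ⟪g x - g y, x - y⟫ = -⟪g x, y - x⟫ - ⟪g y, x - y⟫ := by
    rw [← inner_neg_right, neg_sub, inner_sub_left]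
  rw [hinner, norm_sub_rev]
  field_simp at hxy hyx
  nlinarith

theorem norm_sub_sq_add_mul_norm_sq_le_inner {m L : ℝ} (hm : 0 < m) (hmL : m ≤ L)
    (hsc : ∀ x y, f y ≥ f x + ⟪g x, y - x⟫ + (m / 2) * ‖y - x‖ ^ 2)
    (hlip : ∀ x y, ‖g x - g y‖ ≤ L * ‖x - y‖) (x y : E) :
    ‖g x - g y‖ ^ 2 + m * L * ‖x - y‖ ^ 2 ≤ (m + L) * ⟪g x - g y, x - y⟫ := by
  have hcs a b : ⟪g a - g b, a - b⟫ ≤ L * ‖a - b‖ ^ 2 :=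
    (real_inner_le_norm _ _).trans <| by
      nlinarith [mul_le_mul_of_nonneg_right (hlip a b) (norm_nonneg (a - b))]
  rcases hmL.eq_or_lt with rfl | hlt
  · have hmono : m * ‖x - y‖ ^ 2 ≤ ⟪g x - g y, x - y⟫ := by
      have hxy := hsc x y
      have hyx := hsc y x
      rw [norm_sub_rev y x, ← neg_sub x y, inner_neg_right] at hxy
      rw [inner_sub_left]
      linarith
    nlinarith [hlip x y, norm_nonneg (g x - g y), norm_nonneg (x - y)]
  -- `f - m/2 ‖·‖²` is convex with `(L - m)`-one-sided-Lipschitz gradient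
  have hgrad' z := (hg z).sub_half_mul_norm_sq m
  have hconv' a b : f b - m / 2 * ‖b‖ ^ 2 ≥ f a - m / 2 * ‖a‖ ^ 2 + ⟪g a - m • a, b - a⟫ := by
    have h := hsc a b
    rw [norm_sub_sq_real] at h
    have e : ⟪g a - m • a, b - a⟫ = ⟪g a, b - a⟫ - m * (⟪b, a⟫ - ‖a‖ ^ 2) := by
      simp only [inner_sub_left, inner_sub_right, real_inner_smul_left, real_inner_self_eq_norm_sq,
        real_inner_comm a b]
      ring
    rw [e]
    linarith
  have hC' a b : ⟪(g a - m • a) - (g b - m • b), a - b⟫ ≤ (L - m) * ‖a - b‖ ^ 2 := by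
    rw [sub_sub_sub_comm, ← smul_sub, inner_sub_left, real_inner_smul_left,
      real_inner_self_eq_norm_sq]
    linarith [hcs a b]
  have h := norm_sub_sq_le_mul_inner_of_convex hgrad' (sub_pos.2 hlt) hconv' hC' x y
  rw [sub_sub_sub_comm, ← smul_sub] at h
  generalize g x - g y = G at h ⊢
  generalize x - y = D at h ⊢
  rw [norm_sub_sq_real, inner_sub_left, real_inner_smul_left, real_inner_smul_right, norm_smul,
    real_inner_self_eq_norm_sq, Real.norm_eq_abs, abs_of_pos hm] at h
  nlinarith

theorem norm_sub_smul_sub_sq_le {m L α : ℝ} (hm : 0 < m) (hmL : m ≤ L) (hα0 : 0 ≤ α)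
    (hα : α ≤ 2 / (m + L))
    (hsc : ∀ x y, f y ≥ f x + ⟪g x, y - x⟫ + (m / 2) * ‖y - x‖ ^ 2)
    (hlip : ∀ x y, ‖g x - g y‖ ≤ L * ‖x - y‖) {θs : E} (hmin : ∀ x, f θs ≤ f x) (x : E) :
    ‖x - α • g x - θs‖ ^ 2 ≤ (1 - 2 * α * (m * L / (m + L))) * ‖x - θs‖ ^ 2 := by
  have hmL0 : 0 < m + L := by linarith
  have hgθ : g θs = 0 := IsLocalMin.hasGradientAt_eq_zero (.of_forall hmin) (hg θs)
  have hcoco := norm_sub_sq_add_mul_norm_sq_le_inner hg hm hmL hsc hlip x θs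
  rw [hgθ, sub_zero] at hcoco
  have hα' : α * (m + L) ≤ 2 := (le_div_iff₀ hmL0).1 hα
  rw [sub_right_comm, norm_sub_sq_real, real_inner_smul_right, norm_smul, Real.norm_eq_abs,
    abs_of_nonneg hα0, real_inner_comm, ← sub_nonneg]
  have hstep : 0 ≤ α * (2 - α * (m + L)) * ‖g x‖ ^ 2 := by
    have := sub_nonneg.2 hα'
    positivity
  field_simp
  nlinarith [mul_le_mul_of_nonneg_left hcoco hα0]

end Gradient

theorem MeasureTheory.MemLp.integrable_norm_sq {α E : Type*} [MeasurableSpace α] {μ : Measure α}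
    [NormedAddCommGroup E] {X : α → E} (hX : MemLp X 2 μ) : Integrable (fun ω => ‖X ω‖ ^ 2) μ :=
  (memLp_two_iff_integrable_sq_norm hX.1).1 hX

theorem LipschitzWith.memLp_comp {α E F : Type*} [MeasurableSpace α] {μ : Measure α}
    [IsFiniteMeasure μ] [NormedAddCommGroup E] [NormedAddCommGroup F] {K : NNReal} {g : E → F}
    {X : α → E} {p : ENNReal} (hg : LipschitzWith K g) (hX : MemLp X p μ) :
    MemLp (fun ω => g (X ω)) p μ := by
  have hshift : MemLp (fun ω => g (X ω) - g 0) p μ :=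
    hX.of_le_mul ((hg.continuous.comp_aestronglyMeasurable hX.1).sub aestronglyMeasurable_const)
      (.of_forall fun ω => by simpa [dist_eq_norm] using hg.dist_le_mul (X ω) 0)
  convert hshift.add (memLp_const (g 0)) using 1
  ext ω
  simp

theorem ProbabilityTheory.iIndepFun.indepFun_of_measurable_biSup {Ω ι γ : Type*}
    {_ : MeasurableSpace Ω} {μ : Measure Ω} {β : ι → Type*} [mβ : ∀ i, MeasurableSpace (β i)]
    [MeasurableSpace γ]
    {ξ : ∀ i, Ω → β i} (hξ : ∀ i, Measurable (ξ i)) (hind : iIndepFun ξ μ) {S : Set ι} {i : ι}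
    (hi : i ∉ S) {X : Ω → γ} (hX : Measurable[⨆ j ∈ S, (mβ j).comap (ξ j)] X) :
    IndepFun X (ξ i) μ := by
  have h := indep_iSup_of_disjoint (fun j => (hξ j).comap_le)
    ((iIndepFun_iff_iIndep _ _ _).1 hind) (Set.disjoint_singleton_right.2 hi)
  simp only [Set.mem_singleton_iff, iSup_iSup_eq_left] at h
  exact indep_of_indep_of_le_left h hX.comap_le

section Noise

variable {Ω E : Type*} {_ : MeasurableSpace Ω} {μ : Measure Ω} [IsFiniteMeasure μ]
  [NormedAddCommGroup E] [InnerProductSpace ℝ E] [CompleteSpace E] [MeasurableSpace E]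
  [BorelSpace E]

theorem ProbabilityTheory.IndepFun.integral_norm_sub_smul_sq {Y Z : Ω → E}
    (hYZ : IndepFun Y Z μ) (hY : MemLp Y 2 μ) (hZ : MemLp Z 2 μ) (hZ0 : μ[Z] = 0) (a : ℝ) :
    ∫ ω, ‖Y ω - a • Z ω‖ ^ 2 ∂μ = ∫ ω, ‖Y ω‖ ^ 2 ∂μ + a ^ 2 * ∫ ω, ‖Z ω‖ ^ 2 ∂μ := by
  have hYi := hY.integrable one_le_two
  have hZi := hZ.integrable one_le_two
  have hcross : ∫ ω, ⟪Y ω, Z ω⟫ ∂μ = 0 := by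
    rw [show (0 : ℝ) = innerSL ℝ μ[Y] μ[Z] by rw [hZ0, map_zero]]
    exact hYZ.integral_bilin hYi hZi (innerSL ℝ)
  have hcross_int : Integrable (fun ω => ⟪Y ω, Z ω⟫) μ :=
    hYZ.integrable_bilin hYi hZi (innerSL ℝ)
  simp_rw [norm_sub_sq_real, real_inner_smul_right, norm_smul, mul_pow, Real.norm_eq_abs, sq_abs]
  have hcross_int' := (hcross_int.const_mul a).const_mul 2
  rw [integral_add (f := fun ω => ‖Y ω‖ ^ 2 - 2 * (a * ⟪Y ω, Z ω⟫))
      (hY.integrable_norm_sq.sub hcross_int') (hZ.integrable_norm_sq.const_mul _),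
    integral_sub hY.integrable_norm_sq hcross_int', integral_const_mul, integral_const_mul,
    integral_const_mul, hcross]
  ring

end Noise

section Iterates

variable {Ω E : Type*} [NormedAddCommGroup E] [NormedSpace ℝ E] {n : ℕ}
  (α : ℝ) (g : E → E) (θ₀ : E)

noncomputable def modelAveraging (ξ : ℕ × Fin n → Ω → E) : ℕ → Fin n → Ω → E
  | 0 => fun _ _ => θ₀
  | t + 1 => fun i ω => (1 / (n : ℝ)) • ∑ j, modelAveraging ξ t j ω -
      α • (g ((1 / (n : ℝ)) • ∑ j, modelAveraging ξ t j ω) + ξ (t, i) ω)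

variable {α g θ₀}

theorem eq_modelAveraging {ξ : ℕ × Fin n → Ω → E} {θ : ℕ → Fin n → Ω → E}
    (hinit : ∀ i ω, θ 0 i ω = θ₀)
    (hupd : ∀ t i ω, θ (t + 1) i ω = ((1 / (n : ℝ)) • ∑ j, θ t j ω) -
        α • (g ((1 / (n : ℝ)) • ∑ j, θ t j ω) + ξ (t, i) ω)) :
    θ = modelAveraging α g θ₀ ξ := by
  funext t
  induction t with
  | zero => funext i ω; exact hinit i ω
  | succ t ih => funext i ω; rw [hupd, ih]; rfl

theorem modelAveraging_ae_eq {_ : MeasurableSpace Ω} {μ : Measure Ω}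
    {ξ ξ' : ℕ × Fin n → Ω → E} (h : ∀ p, ξ p =ᵐ[μ] ξ' p) (t : ℕ) (i : Fin n) :
    modelAveraging α g θ₀ ξ t i =ᵐ[μ] modelAveraging α g θ₀ ξ' t i := by
  induction t generalizing i with
  | zero => rfl
  | succ t ih =>
    filter_upwards [ae_all_iff.2 ih, h (t, i)] with ω hθ hξ
    simp only [modelAveraging, hθ, hξ]

abbrev noiseHistory [MeasurableSpace E] (ξ : ℕ × Fin n → Ω → E) (t : ℕ) : MeasurableSpace Ω :=
  ⨆ p ∈ {p : ℕ × Fin n | p.1 < t}, MeasurableSpace.comap (ξ p) ‹_›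

theorem measurable_modelAveraging [MeasurableSpace E] [BorelSpace E] [SecondCountableTopology E]
    (hg : Measurable g) (ξ : ℕ × Fin n → Ω → E) (t : ℕ) (i : Fin n) :
    Measurable[noiseHistory ξ t] (modelAveraging α g θ₀ ξ t i) := by
  induction t generalizing i with
  | zero => exact measurable_const
  | succ t ih =>
    have hmono : noiseHistory ξ t ≤ noiseHistory ξ (t + 1) :=
      biSup_mono fun p hp => Nat.lt_succ_of_lt hp
    have hξ : Measurable[noiseHistory ξ (t + 1)] (ξ (t, i)) :=
      Measurable.of_comap_le (le_iSup₂_of_le (t, i) (Nat.lt_succ_self t) le_rfl)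
    have hbar : Measurable[noiseHistory ξ (t + 1)]
        (fun ω => (1 / (n : ℝ)) • ∑ j, modelAveraging α g θ₀ ξ t j ω) :=
      ((Finset.measurable_fun_sum _ fun j _ => ih j).const_smul _).mono hmono le_rfl
    exact hbar.sub (((hg.comp hbar).add hξ).const_smul α)

theorem memLp_modelAveraging {_ : MeasurableSpace Ω} {μ : Measure Ω} [IsFiniteMeasure μ]
    {K : NNReal} (hg : LipschitzWith K g) {ξ : ℕ × Fin n → Ω → E} (hξ : ∀ p, MemLp (ξ p) 2 μ)
    (t : ℕ) (i : Fin n) : MemLp (modelAveraging α g θ₀ ξ t i) 2 μ := by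
  induction t generalizing i with
  | zero => exact memLp_const θ₀
  | succ t ih =>
    have hbar : MemLp (fun ω => (1 / (n : ℝ)) • ∑ j, modelAveraging α g θ₀ ξ t j ω) 2 μ :=
      (memLp_finsetSum _ fun j _ => ih j).const_smul _
    exact hbar.sub (((hg.memLp_comp hbar).add (hξ (t, i))).const_smul α)

end Iterates

theorem mul_norm_smul_sum_sub_sq_le {E : Type*} [NormedAddCommGroup E] [NormedSpace ℝ E]
    {n : ℕ} (v : Fin n → E) (w : E) :
    (n : ℝ) * ‖(1 / (n : ℝ)) • ∑ j, v j - w‖ ^ 2 ≤ ∑ j, ‖v j - w‖ ^ 2 := by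
  rcases Nat.eq_zero_or_pos n with rfl | hn
  · simp
  have hn' : (0 : ℝ) < n := Nat.cast_pos.2 hn
  have hcenter : (1 / (n : ℝ)) • ∑ j, v j - w = (1 / (n : ℝ)) • ∑ j, (v j - w) := by
    rw [Finset.sum_sub_distrib, smul_sub, Finset.sum_const, Finset.card_univ, Fintype.card_fin,
      ← Nat.cast_smul_eq_nsmul ℝ, smul_smul, one_div_mul_cancel hn'.ne', one_smul]
  have htri : ‖∑ j, (v j - w)‖ ^ 2 ≤ (n : ℝ) * ∑ j, ‖v j - w‖ ^ 2 := by
    calc ‖∑ j, (v j - w)‖ ^ 2 ≤ (∑ j, ‖v j - w‖) ^ 2 := by gcongr; exact norm_sum_le _ _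
      _ ≤ (n : ℝ) * ∑ j, ‖v j - w‖ ^ 2 := by
        simpa using sq_sum_le_card_mul_sum_sq (s := Finset.univ) (f := fun j => ‖v j - w‖)
  rw [hcenter, norm_smul, Real.norm_eq_abs, abs_of_pos (by positivity), mul_pow]
  field_simp
  linarith

section Step

variable {Ω E : Type*} {_ : MeasurableSpace Ω} {μ : Measure Ω} [IsFiniteMeasure μ]
  [NormedAddCommGroup E] [InnerProductSpace ℝ E] [CompleteSpace E] [MeasurableSpace E]
  [BorelSpace E] [SecondCountableTopology E] {n : ℕ} {α c σ : ℝ} {K : NNReal} {g : E → E}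
  {θ₀ θs : E} {ξ : ℕ × Fin n → Ω → E}

theorem integral_sum_norm_modelAveraging_sub_sq_succ_le_of_measurable
    (hg : LipschitzWith K g) (hc0 : 0 ≤ c) (hc : ∀ x, ‖x - α • g x - θs‖ ^ 2 ≤ c * ‖x - θs‖ ^ 2)
    (hξ : ∀ p, Measurable (ξ p)) (hind : iIndepFun ξ μ) (hξL2 : ∀ p, MemLp (ξ p) 2 μ)
    (hmean : ∀ p, μ[ξ p] = 0) (hvar : ∀ p, ∫ ω, ‖ξ p ω‖ ^ 2 ∂μ ≤ σ ^ 2) (t : ℕ) :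
    ∫ ω, ∑ i, ‖modelAveraging α g θ₀ ξ (t + 1) i ω - θs‖ ^ 2 ∂μ ≤
      c * ∫ ω, ∑ i, ‖modelAveraging α g θ₀ ξ t i ω - θs‖ ^ 2 ∂μ + n * (α ^ 2 * σ ^ 2) := by
  set θ := modelAveraging α g θ₀ ξ
  set bar : Ω → E := fun ω => (1 / (n : ℝ)) • ∑ j, θ t j ω
  set Y : Ω → E := fun ω => bar ω - α • g (bar ω) - θs
  have hθL2 := memLp_modelAveraging (α := α) (θ₀ := θ₀) hg hξL2
  have hbarL2 : MemLp bar 2 μ := (memLp_finsetSum _ fun j _ => hθL2 t j).const_smul _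
  have hYL2 : MemLp Y 2 μ :=
    (hbarL2.sub ((hg.memLp_comp hbarL2).const_smul α)).sub (memLp_const θs)
  have hbar_meas : Measurable[noiseHistory ξ t] bar :=
    (Finset.measurable_fun_sum _ fun j _ =>
      measurable_modelAveraging hg.continuous.measurable ξ t j).const_smul _
  have hY_meas : Measurable[noiseHistory ξ t] Y :=
    (hbar_meas.sub ((hg.continuous.measurable.comp hbar_meas).const_smul α)).sub measurable_const
  have hY_indep i : IndepFun Y (ξ (t, i)) μ :=
    hind.indepFun_of_measurable_biSup hξ (by simp) hY_meas
  have hnext i ω : θ (t + 1) i ω - θs = Y ω - α • ξ (t, i) ω := by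
    simp only [θ, Y, bar, modelAveraging, smul_add]
    abel
  have hY_le ω : (n : ℝ) * ‖Y ω‖ ^ 2 ≤ c * ∑ j, ‖θ t j ω - θs‖ ^ 2 :=
    calc (n : ℝ) * ‖Y ω‖ ^ 2 ≤ n * (c * ‖bar ω - θs‖ ^ 2) := by gcongr; exact hc _
      _ = c * (n * ‖bar ω - θs‖ ^ 2) := by ring
      _ ≤ c * ∑ j, ‖θ t j ω - θs‖ ^ 2 := by gcongr; exact mul_norm_smul_sum_sub_sq_le _ _
  have hsq s j : Integrable (fun ω => ‖θ s j ω - θs‖ ^ 2) μ :=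
    ((hθL2 s j).sub (memLp_const θs)).integrable_norm_sq
  calc ∫ ω, ∑ i, ‖θ (t + 1) i ω - θs‖ ^ 2 ∂μ
      = ∑ i : Fin n, (∫ ω, ‖Y ω‖ ^ 2 ∂μ + α ^ 2 * ∫ ω, ‖ξ (t, i) ω‖ ^ 2 ∂μ) := by
        rw [integral_finsetSum _ fun i _ => hsq (t + 1) i]
        simp_rw [hnext]
        exact Finset.sum_congr rfl fun i _ =>
          (hY_indep i).integral_norm_sub_smul_sq hYL2 (hξL2 _) (hmean _) α
    _ ≤ ∑ i : Fin n, (∫ ω, ‖Y ω‖ ^ 2 ∂μ + α ^ 2 * σ ^ 2) := by gcongr with i; exact hvar _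
    _ = ∫ ω, n * ‖Y ω‖ ^ 2 ∂μ + n * (α ^ 2 * σ ^ 2) := by
        simp [integral_const_mul]
    _ ≤ c * ∫ ω, ∑ i, ‖θ t i ω - θs‖ ^ 2 ∂μ + n * (α ^ 2 * σ ^ 2) := by
        gcongr
        rw [← integral_const_mul]
        exact integral_mono (hYL2.integrable_norm_sq.const_mul _)
          ((integrable_finsetSum _ fun j _ => hsq t j).const_mul _) hY_le

theorem integral_sum_norm_modelAveraging_sub_sq_succ_le
    (hg : LipschitzWith K g) (hc0 : 0 ≤ c) (hc : ∀ x, ‖x - α • g x - θs‖ ^ 2 ≤ c * ‖x - θs‖ ^ 2)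
    (hind : iIndepFun ξ μ) (hξL2 : ∀ p, MemLp (ξ p) 2 μ)
    (hmean : ∀ p, μ[ξ p] = 0) (hvar : ∀ p, ∫ ω, ‖ξ p ω‖ ^ 2 ∂μ ≤ σ ^ 2) (t : ℕ) :
    ∫ ω, ∑ i, ‖modelAveraging α g θ₀ ξ (t + 1) i ω - θs‖ ^ 2 ∂μ ≤
      c * ∫ ω, ∑ i, ‖modelAveraging α g θ₀ ξ t i ω - θs‖ ^ 2 ∂μ + n * (α ^ 2 * σ ^ 2) := by
  -- `ξ` is only a.e. strongly measurable: pass to measurable versions, which change the iterates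
  -- only on a null set
  set ξ' := fun p => (hξL2 p).1.mk (ξ p)
  have hae p : ξ p =ᵐ[μ] ξ' p := (hξL2 p).1.ae_eq_mk
  have hintegral s : ∫ ω, ∑ i, ‖modelAveraging α g θ₀ ξ s i ω - θs‖ ^ 2 ∂μ =
      ∫ ω, ∑ i, ‖modelAveraging α g θ₀ ξ' s i ω - θs‖ ^ 2 ∂μ := by
    refine integral_congr_ae ?_
    filter_upwards [ae_all_iff.2 (modelAveraging_ae_eq (α := α) (g := g) (θ₀ := θ₀) hae s)]
      with ω h
    simp only [h]
  rw [hintegral, hintegral]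
  exact integral_sum_norm_modelAveraging_sub_sq_succ_le_of_measurable hg hc0 hc
    (fun p => (hξL2 p).1.stronglyMeasurable_mk.measurable) (hind.congr hae)
    (fun p => (hξL2 p).ae_eq (hae p)) (fun p => (integral_congr_ae (hae p)).symm.trans (hmean p))
    (fun p => (integral_congr_ae ((hae p).fun_comp fun x => ‖x‖ ^ 2)).symm.trans_le (hvar p)) t

end Step

theorem le_pow_mul_add_of_le_mul_add {r : ℕ → ℝ} {c b B : ℝ} (hc : 0 ≤ c) (hB : 0 ≤ B)
    (hfix : c * B + b ≤ B) (h : ∀ t, r (t + 1) ≤ c * r t + b) (t : ℕ) :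
    r t ≤ c ^ t * r 0 + B := by
  induction t with
  | zero => simpa using hB
  | succ t ih =>
    calc r (t + 1) ≤ c * (c ^ t * r 0 + B) + b := (h t).trans (by gcongr)
      _ ≤ c ^ (t + 1) * r 0 + B := by rw [pow_succ]; linarith

theorem MA_convergence_general {d n : ℕ} {m L α σ : ℝ}
    (hm : 0 < m) (hmL : m ≤ L) (hα0 : 0 < α) (hα : α ≤ 2 / (m + L))
    (f : EuclideanSpace ℝ (Fin d) → ℝ) (g : EuclideanSpace ℝ (Fin d) → EuclideanSpace ℝ (Fin d))
    (hgrad : ∀ x, HasGradientAt f (g x) x)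
    (hsc : ∀ x y, f y ≥ f x + ⟪g x, y - x⟫ + (m / 2) * ‖y - x‖ ^ 2)
    (hlip : ∀ x y, ‖g x - g y‖ ≤ L * ‖x - y‖)
    (θs : EuclideanSpace ℝ (Fin d)) (hmin : ∀ x, f θs ≤ f x)
    {Ω : Type*} [MeasureSpace Ω] [IsProbabilityMeasure (ℙ : Measure Ω)]
    (ξ : ℕ × Fin n → Ω → EuclideanSpace ℝ (Fin d))
    (hindep : iIndepFun ξ ℙ)
    (hint : ∀ p, Integrable (ξ p)) (hint2 : ∀ p, Integrable (fun ω => ‖ξ p ω‖ ^ 2))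
    (hmean : ∀ p, ∫ ω, ξ p ω = 0) (hvar : ∀ p, ∫ ω, ‖ξ p ω‖ ^ 2 ≤ σ ^ 2)
    (θ0 : EuclideanSpace ℝ (Fin d))
    (θ : ℕ → Fin n → Ω → EuclideanSpace ℝ (Fin d))
    (hinit : ∀ i ω, θ 0 i ω = θ0)
    (hupd : ∀ t i ω, θ (t + 1) i ω = ((1 / (n : ℝ)) • ∑ j, θ t j ω) -
        α • (g ((1 / (n : ℝ)) • ∑ j, θ t j ω) + ξ (t, i) ω)) :
    ∀ t, (∫ ω, ∑ i, ‖θ t i ω - θs‖ ^ 2) ≤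
      (1 - 2 * α * (m * L / (m + L))) ^ t * ((n : ℝ) * ‖θ0 - θs‖ ^ 2) +
        (n : ℝ) * ((m + L) / (2 * m * L)) * α * σ ^ 2 := by
  have hL : 0 < L := hm.trans_le hmL
  have hc0 : 0 ≤ 1 - 2 * α * (m * L / (m + L)) := by
    rw [sub_nonneg]
    calc 2 * α * (m * L / (m + L)) ≤ 2 * (2 / (m + L)) * (m * L / (m + L)) := by gcongr
      _ = 4 * m * L / (m + L) ^ 2 := by field_simp; ring
      _ ≤ 1 := by rw [div_le_one (by positivity)]; nlinarith [sq_nonneg (m - L)]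
  have hfix : (1 - 2 * α * (m * L / (m + L))) * ((n : ℝ) * ((m + L) / (2 * m * L)) * α * σ ^ 2)
      + n * (α ^ 2 * σ ^ 2) ≤ (n : ℝ) * ((m + L) / (2 * m * L)) * α * σ ^ 2 := by
    refine le_of_eq ?_
    field_simp
    ring
  have hgK : LipschitzWith (Real.toNNReal L) g :=
    LipschitzWith.of_dist_le' fun x y => by simpa only [dist_eq_norm] using hlip x y
  have hξL2 p : MemLp (ξ p) 2 ℙ := (memLp_two_iff_integrable_sq_norm (hint p).1).2 (hint2 p)
  have hrec := integral_sum_norm_modelAveraging_sub_sq_succ_le (θ₀ := θ0) hgK hc0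
    (norm_sub_smul_sub_sq_le hgrad hm hmL hα0.le hα hsc hlip hmin) hindep hξL2 hmean hvar
  obtain rfl := eq_modelAveraging hinit hupd
  intro t
  simpa [modelAveraging] using le_pow_mul_add_of_le_mul_add
    (r := fun t => ∫ ω, ∑ i, ‖modelAveraging α g θ0 ξ t i ω - θs‖ ^ 2) hc0 (by positivity) hfix
    hrec t

theorem MA_convergence {d n : ℕ} {m L α σ : ℝ}
    (hn : 0 < n) (hm : 0 < m) (hmL : m ≤ L) (hα0 : 0 < α) (hα : α ≤ 2 / (m + L)) (hσ : 0 ≤ σ)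
    (f : EuclideanSpace ℝ (Fin d) → ℝ) (g : EuclideanSpace ℝ (Fin d) → EuclideanSpace ℝ (Fin d))
    (hgrad : ∀ x, HasGradientAt f (g x) x)
    (hsc : ∀ x y, f y ≥ f x + ⟪g x, y - x⟫ + (m / 2) * ‖y - x‖ ^ 2)
    (hlip : ∀ x y, ‖g x - g y‖ ≤ L * ‖x - y‖)
    (θs : EuclideanSpace ℝ (Fin d)) (hmin : ∀ x, f θs ≤ f x)
    {Ω : Type*} [MeasureSpace Ω] [IsProbabilityMeasure (ℙ : Measure Ω)]
    (ξ : ℕ × Fin n → Ω → EuclideanSpace ℝ (Fin d))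
    (hindep : iIndepFun ξ ℙ)
    (hint : ∀ p, Integrable (ξ p)) (hint2 : ∀ p, Integrable (fun ω => ‖ξ p ω‖ ^ 2))
    (hmean : ∀ p, ∫ ω, ξ p ω = 0) (hvar : ∀ p, ∫ ω, ‖ξ p ω‖ ^ 2 ≤ σ ^ 2)
    (θ0 : EuclideanSpace ℝ (Fin d))
    (θ : ℕ → Fin n → Ω → EuclideanSpace ℝ (Fin d))
    (hinit : ∀ i ω, θ 0 i ω = θ0)
    (hupd : ∀ t i ω, θ (t + 1) i ω = ((1 / (n : ℝ)) • ∑ j, θ t j ω) -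
        α • (g ((1 / (n : ℝ)) • ∑ j, θ t j ω) + ξ (t, i) ω)) :
    ∀ t, (∫ ω, ∑ i, ‖θ t i ω - θs‖ ^ 2) ≤
      (1 - 2 * α * (m * L / (m + L))) ^ t * ((n : ℝ) * ‖θ0 - θs‖ ^ 2) +
        (n : ℝ) * ((m + L) / (2 * m * L)) * α * σ ^ 2 :=
  MA_convergence_general hm hmL hα0 hα f g hgrad hsc hlip θs hmin ξ hindep hint hint2 hmean hvar θ0
    θ hinit hupd
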